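/- Let E be the Euclidean space ℝ^d with its standard inner product, let x0 ∈ E, let e ∈ E be a unit vector, and let a > 0, s0 > 0 be real numbers. Define v(x) = 1/s0 + a⟨e, x − x0⟩ and κ(x) = 1/v(x) on the open set U = { x : x ≠ x0 and v(x) > 0 }, and define τ(x) = (1/a)·arcosh( 1 + (1/2)s0·a²·κ(x)·‖x − x0‖² ), where arcosh(y) = log(y + sqrt(y² − 1)) for y ≥ 1. Then at every point x ∈ U, the function τ is differentiable and satisfies the eikonal equation ‖∇τ(x)‖² = κ(x)². -/

import Mathlib

/-!
Write `r = ‖x - x0‖²` and `w = 1 + s0 a² κ r / 2`, so that `τ = arcosh w / a`. Since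
`∇κ = -a κ² e`, the chain and product rules give `∇τ = ∇w / (a √(w² - 1))` with
`∇w = (s0 a² κ / 2) (2 (x - x0) - a κ r e)`. Expanding `‖∇w‖²` with `‖e‖ = 1` and eliminating
`⟪e, x - x0⟫` through `κ (1/s0 + a ⟪e, x - x0⟫) = 1` leaves `‖∇w‖² = a² κ² (w² - 1)`.
-/

open RealInnerProductSpace

/-- The inverse hyperbolic cosine `arcosh(y) = log(y + sqrt(y² − 1))`. -/
noncomputable def arcosh (y : ℝ) : ℝ :=
  Real.log (y + Real.sqrt (y ^ 2 - 1))

/-- The slowness `κ(x) = (1/s0 + a ⟪e, x − x0⟫)⁻¹` for a medium with constant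
gradient of velocity. -/
noncomputable def kappaCase2 {d : ℕ} (x0 e : EuclideanSpace ℝ (Fin d))
    (a s0 : ℝ) (x : EuclideanSpace ℝ (Fin d)) : ℝ :=
  (1 / s0 + a * ⟪e, x - x0⟫)⁻¹

/-- The exact travel time
`τ(x) = (1/a)·arcosh(1 + (1/2) s0 a² κ(x) ‖x − x0‖²)` for a medium with
constant gradient of velocity. -/
noncomputable def tauCase2 {d : ℕ} (x0 e : EuclideanSpace ℝ (Fin d))
    (a s0 : ℝ) (x : EuclideanSpace ℝ (Fin d)) : ℝ :=
  (1 / a) * arcosh (1 + (1 / 2) * s0 * a ^ 2 * kappaCase2 x0 e a s0 x * ‖x - x0‖ ^ 2)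

section GradientCalculus

variable {E : Type*} [NormedAddCommGroup E] [InnerProductSpace ℝ E] [CompleteSpace E]
  {f g : E → ℝ} {f' g' : E}

theorem HasDerivAt.comp_hasGradientAt (x : E) {h : ℝ → ℝ} {h' : ℝ} (hh : HasDerivAt h h' (f x))
    (hf : HasGradientAt f f' x) : HasGradientAt (fun y => h (f y)) (h' • f') x := by
  rw [hasGradientAt_iff_hasFDerivAt] at hf ⊢
  refine (hh.comp_hasFDerivAt x hf).congr_fderiv ?_
  ext y
  simp

theorem HasGradientAt.mul {x : E} (hf : HasGradientAt f f' x) (hg : HasGradientAt g g' x) :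
    HasGradientAt (fun y => f y * g y) (f x • g' + g x • f') x := by
  rw [hasGradientAt_iff_hasFDerivAt] at hf hg ⊢
  refine (hf.mul hg).congr_fderiv ?_
  ext y
  simp

theorem hasGradientAt_inner_sub_const (e x₀ x : E) :
    HasGradientAt (fun y => ⟪e, y - x₀⟫) e x := by
  rw [hasGradientAt_iff_hasFDerivAt]
  simp_rw [inner_sub_right]
  exact ((innerSL ℝ e).hasFDerivAt.sub_const _).congr_fderiv (by ext; simp)

theorem hasGradientAt_norm_sub_sq (x₀ x : E) :
    HasGradientAt (fun y => ‖y - x₀‖ ^ 2) (2 • (x - x₀)) x := by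
  rw [hasGradientAt_iff_hasFDerivAt]
  refine ((hasFDerivAt_id x).sub_const x₀).norm_sq.congr_fderiv ?_
  ext y
  simp

end GradientCalculus

section ConstantGradientMedium

variable {d : ℕ} {x0 e x : EuclideanSpace ℝ (Fin d)} {a s0 : ℝ}

theorem hasGradientAt_kappaCase2 (hv : 1 / s0 + a * ⟪e, x - x0⟫ ≠ 0) :
    HasGradientAt (kappaCase2 x0 e a s0) (-(a * kappaCase2 x0 e a s0 x ^ 2) • e) x := by
  have hv' : HasGradientAt (fun y => 1 / s0 + a * ⟪e, y - x0⟫) (a • e) x := by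
    simpa using ((hasDerivAt_id' _).const_mul a |>.const_add (1 / s0)).comp_hasGradientAt x
      (hasGradientAt_inner_sub_const e x0 x)
  convert (hasDerivAt_inv hv).comp_hasGradientAt x hv' using 1
  · rfl
  · rw [smul_smul, kappaCase2, inv_pow]
    ring_nf

theorem hasGradientAt_tauCase2 (hv : 1 / s0 + a * ⟪e, x - x0⟫ ≠ 0)
    (hw : 1 < 1 + 1 / 2 * s0 * a ^ 2 * kappaCase2 x0 e a s0 x * ‖x - x0‖ ^ 2) :
    HasGradientAt (tauCase2 x0 e a s0)
      ((s0 * a * kappaCase2 x0 e a s0 x / 2 /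
          √((1 + 1 / 2 * s0 * a ^ 2 * kappaCase2 x0 e a s0 x * ‖x - x0‖ ^ 2) ^ 2 - 1)) •
        ((2 : ℝ) • (x - x0) - (a * kappaCase2 x0 e a s0 x * ‖x - x0‖ ^ 2) • e)) x := by
  have hφ := ((Real.hasDerivAt_arcosh (by rwa [← mul_assoc])).comp _
    (((hasDerivAt_id' (kappaCase2 x0 e a s0 x * ‖x - x0‖ ^ 2)).const_mul
      (1 / 2 * s0 * a ^ 2)).const_add 1)).const_mul (1 / a)
  convert hφ.comp_hasGradientAt x
    ((hasGradientAt_kappaCase2 hv).mul (hasGradientAt_norm_sub_sq x0 x)) using 1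
  · funext y
    simp only [tauCase2, arcosh, Real.arcosh, Function.comp_apply, mul_assoc]
  · field_simp
    module

end ConstantGradientMedium

theorem eikonal_identity_constant_gradient {a s0 κ r c : ℝ} (hκ : κ * (1 / s0 + a * c) = 1)
    (hp : 0 < s0 * a ^ 2 * κ * r) :
    (s0 * a * κ / 2 / √((1 + 1 / 2 * s0 * a ^ 2 * κ * r) ^ 2 - 1)) ^ 2 *
      (4 * r - 4 * (a * κ * r) * c + (a * κ * r) ^ 2) = κ ^ 2 := by
  obtain ⟨⟨⟨hs0, ha⟩, hκ0⟩, hr⟩ : ((s0 ≠ 0 ∧ a ≠ 0) ∧ κ ≠ 0) ∧ r ≠ 0 := by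
    simpa only [mul_ne_zero_iff, pow_ne_zero_iff two_ne_zero] using hp.ne'
  have hw : (1 + 1 / 2 * s0 * a ^ 2 * κ * r) ^ 2 - 1 =
      s0 * a ^ 2 * κ * r * (4 + s0 * a ^ 2 * κ * r) / 4 := by ring
  have hgrad : 4 * r - 4 * (a * κ * r) * c + (a * κ * r) ^ 2 =
      4 * r * κ / s0 + (a * κ * r) ^ 2 := by
    linear_combination (-4 * r) * hκ
  rw [div_pow, Real.sq_sqrt (by rw [hw]; positivity), hw, hgrad]
  field_simp
  ring

/-- Test case 2 (constant gradient of velocity): for `a > 0`, `s0 > 0`, on the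
open set where `x ≠ x0` and `1/s0 + a⟪e, x − x0⟫ > 0`, the function `τ` is
differentiable and satisfies the eikonal equation `‖∇τ(x)‖² = κ(x)²`. -/
theorem eikonal_constant_gradient_velocity (d : ℕ)
    (x0 e : EuclideanSpace ℝ (Fin d)) (he : ‖e‖ = 1) (a s0 : ℝ)
    (ha : 0 < a) (hs0 : 0 < s0) :
    ∀ x : EuclideanSpace ℝ (Fin d), x ≠ x0 →
      1 / s0 + a * ⟪e, x - x0⟫ > 0 →
      DifferentiableAt ℝ (tauCase2 x0 e a s0) x ∧
      ‖gradient (tauCase2 x0 e a s0) x‖ ^ 2 = (kappaCase2 x0 e a s0 x) ^ 2 := by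
  intro x hx hv
  have hκ : 0 < kappaCase2 x0 e a s0 x := inv_pos.mpr hv
  have hp : 0 < s0 * a ^ 2 * kappaCase2 x0 e a s0 x * ‖x - x0‖ ^ 2 := by
    have := norm_pos_iff.mpr (sub_ne_zero.mpr hx)
    positivity
  have hτ := hasGradientAt_tauCase2 hv.ne' (by linarith)
  refine ⟨hτ.differentiableAt, ?_⟩
  have hnorm : ∀ b : ℝ, ‖(2 : ℝ) • (x - x0) - b • e‖ ^ 2 =
      4 * ‖x - x0‖ ^ 2 - 4 * b * ⟪e, x - x0⟫ + b ^ 2 := by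
    intro b
    rw [norm_sub_sq_real, norm_smul, norm_smul, he, real_inner_smul_left, real_inner_smul_right,
      real_inner_comm]
    simp only [Real.norm_eq_abs, abs_two, mul_pow, sq_abs]
    ring
  rw [hτ.gradient, norm_smul, mul_pow, Real.norm_eq_abs, sq_abs, hnorm]
  exact eikonal_identity_constant_gradient (inv_mul_cancel₀ hv.ne') hp
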